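/- Let (Ω, F, P) be a probability space, S a measurable space, and ς_0, …, ς_{k−1} : Ω → S independent identically distributed random elements with common law ν. Let δ̂ : E × E × S → E be measurable with, for all a, b ∈ E: s ↦ δ̂(a, b, s) square-integrable, δ(a, b) := ∫ δ̂(a, b, s) dν(s), and ∫ ‖δ̂(a, b, s) − δ(a, b)‖² dν(s) ≤ σ². Suppose δ is continuously differentiable. Fix ω̄ ∈ E and define the PFPE iterates ω_0 := ω̄ and ω_{i+1} := ω_i + α·δ̂(ω_i, ω̄, ς_i) for 0 ≤ i ≤ k−1 with stepsize α > 0. Let ω̄⋆ satisfy δ(ω̄⋆, ω̄) = 0 and ω⋆ satisfy δ(ω⋆, ω⋆) = 0, and assume: (i) ‖Id − α·H̄(a, ω̄⋆; ω̄)‖ ≤ ρ for every a ∈ E, and (ii) ‖Id + α·J̄_TD(ω̄, ω⋆)‖ ≤ T. Then for k ≥ 1, E[‖ω_k − ω⋆‖] ≤ ρ^{k−1}·T·‖ω̄ − ω⋆‖ + (1 + ρ^{k−1})·‖ω̄⋆ − ω⋆‖ + (∑_{i=0}^{k−1} ρ^i)·α·σ. -/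

import Mathlib

open MeasureTheory intervalIntegral Finset

noncomputable section

abbrev E (n : ℕ) := EuclideanSpace ℝ (Fin n)

/-- Partial Fréchet derivative of `δ` w.r.t. its first argument. -/
noncomputable def D1 {n : ℕ} (δ : E n × E n → E n) (a b : E n) : E n →L[ℝ] E n :=
  fderiv ℝ (fun x => δ (x, b)) a

/-- Path-mean Hessian `H̄(ω, ω⋆; ω̄) = −∫₀¹ D₁δ(ω − t(ω − ω⋆), ω̄) dt`. -/
noncomputable def Hbar {n : ℕ} (δ : E n × E n → E n) (ω ωs ωbar : E n) : E n →L[ℝ] E n :=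
  -∫ t in (0:ℝ)..1, D1 δ (ω - t • (ω - ωs)) ωbar

/-- Path-mean TD Jacobian `J̄_TD(ω, ω⋆) = ∫₀¹ Dg(ω − t(ω − ω⋆)) dt` for `g(x) = δ(x,x)`. -/
noncomputable def JTD {n : ℕ} (δ : E n × E n → E n) (ω ωs : E n) : E n →L[ℝ] E n :=
  ∫ t in (0:ℝ)..1, fderiv ℝ (fun x => δ (x, x)) (ω - t • (ω - ωs))

/-!
Write `eⱼ = ωⱼ - ω̄⋆`. The fundamental theorem of calculus along the segment from `ω̄⋆` to `ωⱼ`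
gives `δ(ωⱼ, ω̄) = -H̄(ωⱼ, ω̄⋆; ω̄) eⱼ`, so
`eⱼ₊₁ = (Id - α H̄) eⱼ + α (δ̂(ωⱼ, ω̄, ςⱼ) - δ(ωⱼ, ω̄))` and `‖eⱼ₊₁‖ ≤ ρ ‖eⱼ‖ + α ‖noise‖`.
The iterate `ωⱼ` is a measurable function of `ς₀, …, ςⱼ₋₁`, hence independent of `ςⱼ`; conditioning
on it, the noise has `L¹` norm at most its `L²` norm `σ`. The first step uses instead
`δ(ω̄, ω̄) = J̄_TD(ω̄, ω⋆)(ω̄ - ω⋆)`, so `‖e₁‖ ≤ T ‖ω̄ - ω⋆‖ + ‖ω̄⋆ - ω⋆‖ + α ‖noise‖`.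
Unrolling the recursion and a last triangle inequality through `ω̄⋆` give the bound.
Expectations are handled as lower Lebesgue integrals, so no integrability of the iterates is needed.
-/

open scoped ENNReal
open ProbabilityTheory

theorem sub_eq_integral_fderiv_segment_apply {F G : Type*} [NormedAddCommGroup F]
    [NormedSpace ℝ F] [NormedAddCommGroup G] [NormedSpace ℝ G] [CompleteSpace G] {f : F → G}
    (hf : ContDiff ℝ 1 f) (a b : F) :
    f a - f b = (∫ t in (0:ℝ)..1, fderiv ℝ f (a - t • (a - b))) (a - b) := by
  have hpath : ∀ t : ℝ, HasDerivAt (fun t : ℝ => a - t • (a - b)) (-(a - b)) t := fun t => by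
    simpa using ((hasDerivAt_id t).smul_const (a - b)).const_sub a
  have hderiv : ∀ t ∈ Set.uIcc (0:ℝ) 1, HasDerivAt (fun t : ℝ => f (a - t • (a - b)))
      (fderiv ℝ f (a - t • (a - b)) (-(a - b))) t := fun t _ =>
    (hf.differentiable one_ne_zero _).hasFDerivAt.comp_hasDerivAt t (hpath t)
  have hcont : Continuous fun t : ℝ => fderiv ℝ f (a - t • (a - b)) :=
    (hf.continuous_fderiv one_ne_zero).comp (by fun_prop)
  rw [ContinuousLinearMap.intervalIntegral_apply (hcont.intervalIntegrable 0 1)]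
  have := integral_eq_sub_of_hasDerivAt hderiv
    ((hcont.clm_apply continuous_const).intervalIntegrable 0 1)
  simp only [map_neg, intervalIntegral.integral_neg, one_smul, zero_smul, sub_zero,
    sub_sub_cancel] at this
  rw [← neg_sub, ← this, neg_neg]

theorem lintegral_enorm_le_of_integral_norm_sq_le {S G : Type*} [MeasurableSpace S]
    [NormedAddCommGroup G] {ν : Measure S} [IsProbabilityMeasure ν] {f : S → G}
    (hf : MemLp f 2 ν) {σ : ℝ} (hσ : 0 ≤ σ) (hvar : ∫ s, ‖f s‖ ^ 2 ∂ν ≤ σ ^ 2) :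
    ∫⁻ s, ‖f s‖ₑ ∂ν ≤ ENNReal.ofReal σ := by
  calc ∫⁻ s, ‖f s‖ₑ ∂ν = eLpNorm f 1 ν := eLpNorm_one_eq_lintegral_enorm.symm
    _ ≤ eLpNorm f 2 ν := eLpNorm_le_eLpNorm_of_exponent_le one_le_two hf.aestronglyMeasurable
    _ = ENNReal.ofReal (√(∫ s, ‖f s‖ ^ 2 ∂ν)) := by
      rw [hf.eLpNorm_eq_integral_rpow_norm two_ne_zero ENNReal.ofNat_ne_top, Real.sqrt_eq_rpow]
      norm_num
    _ ≤ ENNReal.ofReal σ := by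
      gcongr
      exact Real.sqrt_le_iff.mpr ⟨hσ, hvar⟩

theorem lintegral_comp_le_of_indepFun {Ω S A : Type*} [MeasurableSpace Ω]
    [MeasurableSpace S] [MeasurableSpace A] {P : Measure Ω} [IsProbabilityMeasure P]
    {X : Ω → A} {Y : Ω → S} (hX : Measurable X) (hY : Measurable Y) (hXY : IndepFun X Y P)
    {g : A × S → ℝ≥0∞} (hg : Measurable g) {c : ℝ≥0∞}
    (hc : ∀ a, ∫⁻ s, g (a, s) ∂(P.map Y) ≤ c) :
    ∫⁻ x, g (X x, Y x) ∂P ≤ c := by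
  have := Measure.isProbabilityMeasure_map (μ := P) hX.aemeasurable
  rw [← lintegral_map hg (hX.prodMk hY),
    (indepFun_iff_map_prod_eq_prod_map_map hX.aemeasurable hY.aemeasurable).1 hXY,
    lintegral_prod _ hg.aemeasurable]
  calc ∫⁻ a, ∫⁻ s, g (a, s) ∂(P.map Y) ∂(P.map X) ≤ ∫⁻ _, c ∂(P.map X) := lintegral_mono hc
    _ = c := by simp

section Recursion

variable {Ω S A : Type*} [mS : MeasurableSpace S] [MeasurableSpace A] {ς : ℕ → Ω → S}
  {X : ℕ → Ω → A} {Φ : A × S → A} {k : ℕ} {c : A}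

theorem measurable_iSup_comap_of_recursion (hΦ : Measurable Φ) (hX0 : X 0 = fun _ => c)
    (hrec : ∀ i < k, X (i + 1) = fun x => Φ (X i x, ς i x)) :
    ∀ j ≤ k, Measurable[(⨆ i ∈ Set.Iio j, mS.comap (ς i))] (X j)
  | 0, _ => hX0 ▸ measurable_const
  | j + 1, hj => by
    rw [hrec j hj]
    refine hΦ.comp (Measurable.prodMk ?_ (Measurable.of_comap_le ?_))
    · exact (measurable_iSup_comap_of_recursion hΦ hX0 hrec j (by omega)).mono
        (biSup_mono fun i hi => Nat.lt_succ_of_lt hi) le_rfl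
    · exact le_iSup₂ (f := fun i (_ : i ∈ Set.Iio (j + 1)) => mS.comap (ς i)) j j.lt_succ_self

variable [MeasurableSpace Ω]

theorem measurable_of_recursion (hς : ∀ i, Measurable (ς i)) (hΦ : Measurable Φ)
    (hX0 : X 0 = fun _ => c) (hrec : ∀ i < k, X (i + 1) = fun x => Φ (X i x, ς i x))
    {j : ℕ} (hj : j ≤ k) : Measurable (X j) :=
  (measurable_iSup_comap_of_recursion hΦ hX0 hrec j hj).mono
    (iSup₂_le fun i _ => (hς i).comap_le) le_rfl

theorem indepFun_of_recursion {P : Measure Ω} (hς : ∀ i, Measurable (ς i))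
    (hindep : iIndepFun ς P) (hΦ : Measurable Φ)
    (hX0 : X 0 = fun _ => c) (hrec : ∀ i < k, X (i + 1) = fun x => Φ (X i x, ς i x))
    {j : ℕ} (hj : j < k) : IndepFun (X j) (ς j) P := by
  have hpast := indep_iSup_of_disjoint (fun i => (hς i).comap_le)
    ((iIndepFun_iff_iIndep _ _ _).1 hindep)
    (S := Set.Iio j) (T := {j}) (by simp)
  exact indep_of_indep_of_le hpast
    (measurable_iSup_comap_of_recursion hΦ hX0 hrec j hj.le).comap_le
    (le_iSup₂ (f := fun i (_ : i ∈ ({j} : Set ℕ)) => mS.comap (ς i)) j rfl)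

end Recursion

theorem lintegral_enorm_le_of_norm_le_add_mul {Ω F G : Type*} [MeasurableSpace Ω]
    {P : Measure Ω} [NormedAddCommGroup F] [NormedAddCommGroup G] {Z : Ω → F} {W : Ω → G}
    (hW : AEStronglyMeasurable W P) {B : Ω → ℝ} {α σ : ℝ} (hα : 0 ≤ α)
    (hZ : ∀ x, ‖Z x‖ ≤ B x + α * ‖W x‖) (hWσ : ∫⁻ x, ‖W x‖ₑ ∂P ≤ ENNReal.ofReal σ) :
    ∫⁻ x, ‖Z x‖ₑ ∂P ≤ ∫⁻ x, ENNReal.ofReal (B x) ∂P + ENNReal.ofReal (α * σ) :=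
  calc ∫⁻ x, ‖Z x‖ₑ ∂P
      ≤ ∫⁻ x, (ENNReal.ofReal (B x) + ENNReal.ofReal α * ‖W x‖ₑ) ∂P := by
        refine lintegral_mono fun x => ?_
        rw [← ofReal_norm, ← ofReal_norm, ← ENNReal.ofReal_mul hα]
        exact (ENNReal.ofReal_le_ofReal (hZ x)).trans ENNReal.ofReal_add_le
    _ = ∫⁻ x, ENNReal.ofReal (B x) ∂P + ENNReal.ofReal α * ∫⁻ x, ‖W x‖ₑ ∂P := by
        rw [lintegral_add_right' _ (hW.enorm.const_mul _),
          lintegral_const_mul' _ _ ENNReal.ofReal_ne_top]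
    _ ≤ ∫⁻ x, ENNReal.ofReal (B x) ∂P + ENNReal.ofReal (α * σ) := by
        rw [ENNReal.ofReal_mul hα]
        gcongr

theorem le_ofReal_geom_of_le_mul_add {e : ℕ → ℝ≥0∞} {ρ b c : ℝ} (hρ : 0 ≤ ρ) (hb : 0 ≤ b)
    (hc : 0 ≤ c) (h0 : e 0 ≤ ENNReal.ofReal b) :
    ∀ {m : ℕ}, (∀ j < m, e (j + 1) ≤ ENNReal.ofReal ρ * e j + ENNReal.ofReal c) →
      e m ≤ ENNReal.ofReal (ρ ^ m * b + (∑ i ∈ range m, ρ ^ i) * c)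
  | 0, _ => by simpa using h0
  | m + 1, hstep => by
    have ih := le_ofReal_geom_of_le_mul_add hρ hb hc h0 (m := m) fun j hj => hstep j (by omega)
    calc e (m + 1) ≤ ENNReal.ofReal ρ * e m + ENNReal.ofReal c := hstep m m.lt_succ_self
      _ ≤ ENNReal.ofReal ρ * ENNReal.ofReal (ρ ^ m * b + (∑ i ∈ range m, ρ ^ i) * c)
          + ENNReal.ofReal c := by gcongr
      _ = ENNReal.ofReal (ρ ^ (m + 1) * b + (∑ i ∈ range (m + 1), ρ ^ i) * c) := by
        rw [← ENNReal.ofReal_mul hρ, ← ENNReal.ofReal_add (by positivity) hc, geom_sum_succ]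
        ring_nf

theorem integral_norm_sub_le_of_lintegral_enorm_sub_le {Ω F : Type*} [MeasurableSpace Ω]
    {P : Measure Ω} [IsProbabilityMeasure P] [NormedAddCommGroup F] {f : Ω → F} {c c' : F}
    {B : ℝ} (hB : 0 ≤ B) (h : ∫⁻ x, ‖f x - c‖ₑ ∂P ≤ ENNReal.ofReal B) :
    ∫ x, ‖f x - c'‖ ∂P ≤ B + ‖c - c'‖ := by
  -- No measurability of `f` is needed: if `‖f - c'‖` is not integrable, its integral is `0`.
  refine (Real.le_norm_self _).trans ((norm_integral_le_lintegral_norm _).trans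
    (ENNReal.toReal_le_of_le_ofReal (by positivity) ?_))
  simp_rw [norm_norm, ofReal_norm]
  calc ∫⁻ x, ‖f x - c'‖ₑ ∂P ≤ ∫⁻ x, (‖f x - c‖ₑ + ‖c - c'‖ₑ) ∂P :=
        lintegral_mono fun x => by simpa using enorm_add_le (f x - c) (c - c')
    _ = ∫⁻ x, ‖f x - c‖ₑ ∂P + ‖c - c'‖ₑ := by simp [lintegral_add_right]
    _ ≤ ENNReal.ofReal B + ENNReal.ofReal ‖c - c'‖ := by rw [ofReal_norm]; gcongr
    _ = ENNReal.ofReal (B + ‖c - c'‖) := (ENNReal.ofReal_add hB (norm_nonneg _)).symm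

section PFPE

variable {n : ℕ} {δ : E n × E n → E n}

theorem Hbar_apply_sub (hδ : ContDiff ℝ 1 δ) (a c b : E n) :
    Hbar δ a c b (a - c) = δ (c, b) - δ (a, b) := by
  rw [Hbar, neg_apply, ← neg_sub (δ (a, b)), neg_inj]
  exact (sub_eq_integral_fderiv_segment_apply
    (hδ.comp (contDiff_id.prodMk contDiff_const)) a c).symm

theorem JTD_apply_sub (hδ : ContDiff ℝ 1 δ) (a c : E n) :
    JTD δ a c (a - c) = δ (a, a) - δ (c, c) :=
  (sub_eq_integral_fderiv_segment_apply (hδ.comp (contDiff_id.prodMk contDiff_id)) a c).symm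

theorem norm_add_smul_sub_le_of_norm_Hbar_le (hδ : ContDiff ℝ 1 δ) {a c b : E n}
    (hfit : δ (c, b) = 0) {α ρ : ℝ}
    (hρ : ‖ContinuousLinearMap.id ℝ (E n) - α • Hbar δ a c b‖ ≤ ρ) (d : E n) :
    ‖a + α • d - c‖ ≤ ρ * ‖a - c‖ + |α| * ‖d - δ (a, b)‖ := by
  have hsplit : a + α • d - c
      = (ContinuousLinearMap.id ℝ (E n) - α • Hbar δ a c b) (a - c) + α • (d - δ (a, b)) := by
    simp only [sub_apply, smul_apply, ContinuousLinearMap.id_apply, Hbar_apply_sub hδ, hfit]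
    module
  rw [hsplit]
  refine (norm_add_le _ _).trans (add_le_add (ContinuousLinearMap.le_of_opNorm_le _ hρ _) ?_)
  rw [norm_smul, Real.norm_eq_abs]

theorem norm_add_smul_sub_le_of_norm_JTD_le (hδ : ContDiff ℝ 1 δ) {a c c' : E n}
    (hfix : δ (c, c) = 0) {α T : ℝ}
    (hT : ‖ContinuousLinearMap.id ℝ (E n) + α • JTD δ a c‖ ≤ T) (d : E n) :
    ‖a + α • d - c'‖ ≤ T * ‖a - c‖ + ‖c' - c‖ + |α| * ‖d - δ (a, a)‖ := by
  have hsplit : a + α • d - c'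
      = (ContinuousLinearMap.id ℝ (E n) + α • JTD δ a c) (a - c) + (c - c')
        + α • (d - δ (a, a)) := by
    simp only [add_apply, smul_apply, ContinuousLinearMap.id_apply, JTD_apply_sub hδ, hfix]
    module
  rw [hsplit]
  refine (norm_add_le _ _).trans (add_le_add ((norm_add_le _ _).trans
    (add_le_add (ContinuousLinearMap.le_of_opNorm_le _ hT _) (norm_sub_rev _ _).le)) ?_)
  rw [norm_smul, Real.norm_eq_abs]

theorem lintegral_enorm_pfpe_step_le {Ω S : Type*} [MeasurableSpace Ω] [MeasurableSpace S]
    {P : Measure Ω} [IsProbabilityMeasure P] {ν : Measure S} {ς : ℕ → Ω → S}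
    (hς : ∀ i, Measurable (ς i)) (hindep : iIndepFun ς P)
    {δhat : E n → E n → S → E n}
    (hδhat : Measurable (fun p : (E n × E n) × S => δhat p.1.1 p.1.2 p.2))
    (hδ : Continuous δ) {b : E n} {σ : ℝ} (hσ : 0 ≤ σ) (hL2 : ∀ a, MemLp (δhat a b) 2 ν)
    (hvar : ∀ a, ∫ s, ‖δhat a b s - δ (a, b)‖ ^ 2 ∂ν ≤ σ ^ 2)
    {α : ℝ} (hα : 0 ≤ α) {k : ℕ} {ω : ℕ → Ω → E n} {w : E n} (hω0 : ω 0 = fun _ => w)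
    (hωrec : ∀ i < k, ω (i + 1) = fun x => ω i x + α • δhat (ω i x) b (ς i x))
    {j : ℕ} (hj : j < k) (hlaw : P.map (ς j) = ν) {c : E n} {B : Ω → ℝ}
    (hB : ∀ x d, ‖ω j x + α • d - c‖ ≤ B x + α * ‖d - δ (ω j x, b)‖) :
    ∫⁻ x, ‖ω (j + 1) x - c‖ₑ ∂P ≤ ∫⁻ x, ENNReal.ofReal (B x) ∂P + ENNReal.ofReal (α * σ) := by
  have hδhat_b : Measurable fun p : E n × S => δhat p.1 b p.2 :=
    hδhat.comp ((measurable_fst.prodMk measurable_const).prodMk measurable_snd)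
  have hΦ : Measurable fun p : E n × S => p.1 + α • δhat p.1 b p.2 :=
    measurable_fst.add (hδhat_b.const_smul α)
  have hN : Measurable fun p : E n × S => δhat p.1 b p.2 - δ (p.1, b) :=
    hδhat_b.sub (hδ.measurable.comp (measurable_fst.prodMk measurable_const))
  have hωj := measurable_of_recursion hς hΦ hω0 hωrec hj.le
  have : IsProbabilityMeasure ν := hlaw ▸ Measure.isProbabilityMeasure_map (hς j).aemeasurable
  have hnoise : ∫⁻ x, ‖δhat (ω j x) b (ς j x) - δ (ω j x, b)‖ₑ ∂P ≤ ENNReal.ofReal σ := by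
    refine lintegral_comp_le_of_indepFun (g := fun p => ‖δhat p.1 b p.2 - δ (p.1, b)‖ₑ) hωj
      (hς j) (indepFun_of_recursion hς hindep hΦ hω0 hωrec hj) hN.enorm fun a => ?_
    rw [hlaw]
    exact lintegral_enorm_le_of_integral_norm_sq_le (f := fun s => δhat a b s - δ (a, b))
      ((hL2 a).sub (memLp_const _)) hσ (hvar a)
  rw [hωrec j hj]
  exact lintegral_enorm_le_of_norm_le_add_mul (hN.comp (hωj.prodMk (hς j))).aestronglyMeasurable
    hα (fun x => hB x _) hnoise

end PFPE

theorem pfpe_finite_time_bound_general {n : ℕ} {Ωt S : Type*}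
    [MeasurableSpace Ωt] [MeasurableSpace S]
    (P : Measure Ωt) [IsProbabilityMeasure P]
    (ν : Measure S)
    (ς : ℕ → Ωt → S) (hςmeas : ∀ i, Measurable (ς i))
    (hindep : ProbabilityTheory.iIndepFun ς P)
    (hlaw : ∀ i, Measure.map (ς i) P = ν)
    (δhat : E n → E n → S → E n)
    (hδhatmeas : Measurable (fun p : (E n × E n) × S => δhat p.1.1 p.1.2 p.2))
    (δ : E n × E n → E n) (hδ : ContDiff ℝ 1 δ)
    (hL2 : ∀ a b : E n, MemLp (fun s => δhat a b s) 2 ν)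
    (σ : ℝ) (hσ : 0 ≤ σ)
    (hvar : ∀ a b : E n, ∫ s, ‖δhat a b s - δ (a, b)‖ ^ 2 ∂ν ≤ σ ^ 2)
    (ωbar ωbars ωs : E n) (hfit : δ (ωbars, ωbar) = 0) (hfix : δ (ωs, ωs) = 0)
    (α : ℝ) (hα : 0 < α)
    (k : ℕ) (hk : 1 ≤ k)
    (ω : ℕ → Ωt → E n) (hω0 : ω 0 = fun _ => ωbar)
    (hωrec : ∀ i : ℕ, i < k →
      ω (i + 1) = fun x => ω i x + α • δhat (ω i x) ωbar (ς i x))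
    (ρ T : ℝ)
    (hρ : ∀ a : E n, ‖ContinuousLinearMap.id ℝ (E n) - α • Hbar δ a ωbars ωbar‖ ≤ ρ)
    (hT : ‖ContinuousLinearMap.id ℝ (E n) + α • JTD δ ωbar ωs‖ ≤ T) :
    ∫ x, ‖ω k x - ωs‖ ∂P ≤
      ρ ^ (k - 1) * T * ‖ωbar - ωs‖ + (1 + ρ ^ (k - 1)) * ‖ωbars - ωs‖ +
        (∑ i ∈ Finset.range k, ρ ^ i) * (α * σ) := by
  have hρ0 : 0 ≤ ρ := (norm_nonneg _).trans (hρ 0)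
  have hT0 : 0 ≤ T := (norm_nonneg _).trans hT
  have hstep : ∀ j < k, ∀ B : Ωt → ℝ,
      (∀ x d, ‖ω j x + α • d - ωbars‖ ≤ B x + α * ‖d - δ (ω j x, ωbar)‖) →
      ∫⁻ x, ‖ω (j + 1) x - ωbars‖ₑ ∂P ≤ ∫⁻ x, ENNReal.ofReal (B x) ∂P + ENNReal.ofReal (α * σ) :=
    fun j hj _ => lintegral_enorm_pfpe_step_le hςmeas hindep hδhatmeas hδ.continuous hσ
      (fun a => hL2 a ωbar) (fun a => hvar a ωbar) hα.le hω0 hωrec hj (hlaw j)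
  have hfirst : ∫⁻ x, ‖ω 1 x - ωbars‖ₑ ∂P
      ≤ ENNReal.ofReal (T * ‖ωbar - ωs‖ + ‖ωbars - ωs‖ + α * σ) := by
    have h := hstep 0 hk (fun _ => T * ‖ωbar - ωs‖ + ‖ωbars - ωs‖) fun x d => by
      simpa [hω0, abs_of_pos hα] using norm_add_smul_sub_le_of_norm_JTD_le hδ hfix hT d
    rwa [lintegral_const, measure_univ, mul_one, ← ENNReal.ofReal_add (by positivity)
      (by positivity)] at h
  have hcontract : ∀ j, j + 1 < k → ∫⁻ x, ‖ω (j + 2) x - ωbars‖ₑ ∂P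
      ≤ ENNReal.ofReal ρ * ∫⁻ x, ‖ω (j + 1) x - ωbars‖ₑ ∂P + ENNReal.ofReal (α * σ) := by
    intro j hj
    have h := hstep (j + 1) hj (fun x => ρ * ‖ω (j + 1) x - ωbars‖) fun x d => by
      simpa [abs_of_pos hα] using norm_add_smul_sub_le_of_norm_Hbar_le hδ hfit (hρ _) d
    simpa only [ENNReal.ofReal_mul hρ0, ofReal_norm,
      lintegral_const_mul' _ _ ENNReal.ofReal_ne_top] using h
  obtain ⟨m, rfl⟩ : ∃ m, k = m + 1 := ⟨k - 1, by omega⟩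
  have hlast := le_ofReal_geom_of_le_mul_add (e := fun j => ∫⁻ x, ‖ω (j + 1) x - ωbars‖ₑ ∂P)
    hρ0 (by positivity) (by positivity) hfirst (m := m) fun j hj => hcontract j (by omega)
  refine (integral_norm_sub_le_of_lintegral_enorm_sub_le (by positivity) hlast).trans_eq ?_
  rw [Nat.add_sub_cancel, Finset.sum_range_succ]
  ring

/-- Theorem 3 of the paper, the finite-time PFPE error bound:
for `k` inner stochastic gradient steps on i.i.d. samples `ς_0, …, ς_{k−1}` with common
law `ν`, PFPE iterates `ω_0 = ω̄`, `ω_{i+1} = ω_i + α·δ̂(ω_i, ω̄, ς_i)`, fitted point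
`δ(ω̄⋆, ω̄) = 0`, TD fixed point `δ(ω⋆, ω⋆) = 0`, contraction bounds
`‖Id − α·H̄(a, ω̄⋆; ω̄)‖ ≤ ρ` (for all `a`) and `‖Id + α·J̄_TD(ω̄, ω⋆)‖ ≤ T`:
`E[‖ω_k − ω⋆‖] ≤ ρ^{k−1}·T·‖ω̄ − ω⋆‖ + (1 + ρ^{k−1})·‖ω̄⋆ − ω⋆‖ + (∑_{i<k} ρ^i)·α·σ`. -/
theorem pfpe_finite_time_bound {n : ℕ} {Ωt S : Type*}
    [MeasurableSpace Ωt] [MeasurableSpace S]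
    (P : Measure Ωt) [IsProbabilityMeasure P]
    (ν : Measure S) [IsProbabilityMeasure ν]
    (ς : ℕ → Ωt → S) (hςmeas : ∀ i, Measurable (ς i))
    (hindep : ProbabilityTheory.iIndepFun ς P)
    (hlaw : ∀ i, Measure.map (ς i) P = ν)
    (δhat : E n → E n → S → E n)
    (hδhatmeas : Measurable (fun p : (E n × E n) × S => δhat p.1.1 p.1.2 p.2))
    (δ : E n × E n → E n) (hδ : ContDiff ℝ 1 δ)
    (hL2 : ∀ a b : E n, MemLp (fun s => δhat a b s) 2 ν)
    (hmean : ∀ a b : E n, δ (a, b) = ∫ s, δhat a b s ∂ν)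
    (σ : ℝ) (hσ : 0 ≤ σ)
    (hvar : ∀ a b : E n, ∫ s, ‖δhat a b s - δ (a, b)‖ ^ 2 ∂ν ≤ σ ^ 2)
    (ωbar ωbars ωs : E n) (hfit : δ (ωbars, ωbar) = 0) (hfix : δ (ωs, ωs) = 0)
    (α : ℝ) (hα : 0 < α)
    (k : ℕ) (hk : 1 ≤ k)
    (ω : ℕ → Ωt → E n) (hω0 : ω 0 = fun _ => ωbar)
    (hωrec : ∀ i : ℕ, i < k →
      ω (i + 1) = fun x => ω i x + α • δhat (ω i x) ωbar (ς i x))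
    (ρ T : ℝ)
    (hρ : ∀ a : E n, ‖ContinuousLinearMap.id ℝ (E n) - α • Hbar δ a ωbars ωbar‖ ≤ ρ)
    (hT : ‖ContinuousLinearMap.id ℝ (E n) + α • JTD δ ωbar ωs‖ ≤ T) :
    ∫ x, ‖ω k x - ωs‖ ∂P ≤
      ρ ^ (k - 1) * T * ‖ωbar - ωs‖ + (1 + ρ ^ (k - 1)) * ‖ωbars - ωs‖ +
        (∑ i ∈ Finset.range k, ρ ^ i) * (α * σ) :=
  pfpe_finite_time_bound_general P ν ς hςmeas hindep hlaw δhat hδhatmeas δ hδ hL2 σ hσ hvar ωbar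
    ωbars ωs hfit hfix α hα k hk ω hω0 hωrec ρ T hρ hT

end
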